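/- arXiv:2001.01373 — 2 statements merged into one kernel-verified Lean document; each statement's English description precedes it below -/
import Mathlib

section
/- The tempered posterior interpolates in KL divergence monotonically toward the full posterior in the exponent β: for fixed positive likelihood f, prior p, and full posterior π₁ = f·p/Z(1), the map β ↦ D_KL(π₁ ‖ π_β) is nonincreasing on [0,1], where π_β = f^β p / Z(β). -/
/-!
Write `Z(β) = ∑ f^β p` and `m(β) = E_{π_β}[log f]`. Expanding the logarithm gives
`D_KL(π₁ ‖ π_β) = log Z(β) - β m(1) + (m(1) - log Z(1))`. Jensen's inequality for `exp` under `π_b`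
shows that `m(b)` is a subgradient of the convex function `log Z` at `b`, and a function minus a
linear function whose slope is a subgradient at `c` decreases to the left of `c`.
-/

open Real Finset

theorem antitoneOn_sub_mul_of_subgradient {L m : ℝ → ℝ}
    (hsub : ∀ a b, (a - b) * m b ≤ L a - L b) (c : ℝ) :
    AntitoneOn (fun x => L x - x * m c) (Set.Iic c) := by
  intro x _ y hy hxy
  have hm : m y ≤ m c := by
    rcases (Set.mem_Iic.mp hy).eq_or_lt with rfl | hyc
    · rfl
    · have hslope : (c - y) * m y ≤ (c - y) * m c := by linarith [hsub c y, hsub y c]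
      exact le_of_mul_le_mul_left hslope (sub_pos.mpr hyc)
  linarith [hsub x y, mul_le_mul_of_nonneg_left hm (sub_nonneg.mpr hxy)]

namespace Tempering

variable {Θ : Type*} [Fintype Θ] (f p : Θ → ℝ)

noncomputable def partition (β : ℝ) : ℝ := ∑ θ, f θ ^ β * p θ

noncomputable def posterior (β : ℝ) (θ : Θ) : ℝ := f θ ^ β * p θ / partition f p β

noncomputable def meanLog (β : ℝ) : ℝ := ∑ θ, posterior f p β θ * log (f θ)

variable {f p} [Nonempty Θ] (hf : ∀ θ, 0 < f θ) (hp : ∀ θ, 0 < p θ)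
include hf hp

theorem partition_pos (β : ℝ) : 0 < partition f p β :=
  sum_pos (fun θ _ => mul_pos (rpow_pos_of_pos (hf θ) β) (hp θ)) univ_nonempty

theorem posterior_pos (β : ℝ) (θ : Θ) : 0 < posterior f p β θ :=
  div_pos (mul_pos (rpow_pos_of_pos (hf θ) β) (hp θ)) (partition_pos hf hp β)

theorem sum_posterior (β : ℝ) : ∑ θ, posterior f p β θ = 1 := by
  simp only [posterior, ← sum_div]
  exact div_self (partition_pos hf hp β).ne'

theorem posterior_div_posterior (a b : ℝ) (θ : Θ) :
    posterior f p a θ / posterior f p b θ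
      = f θ ^ (a - b) * (partition f p b / partition f p a) := by
  have hZa := (partition_pos hf hp a).ne'
  have hZb := (partition_pos hf hp b).ne'
  have hfb := (rpow_pos_of_pos (hf θ) b).ne'
  rw [posterior, posterior, rpow_sub (hf θ)]
  field_simp [(hp θ).ne']

theorem partition_div_partition (a b : ℝ) :
    partition f p a / partition f p b = ∑ θ, posterior f p b θ * exp ((a - b) * log (f θ)) := by
  rw [div_eq_iff (partition_pos hf hp b).ne', sum_mul, partition]
  refine sum_congr rfl fun θ _ => ?_
  rw [mul_comm (a - b), ← rpow_def_of_pos (hf θ), posterior, mul_right_comm,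
    div_mul_cancel₀ _ (partition_pos hf hp b).ne', mul_right_comm, ← rpow_add (hf θ),
    add_sub_cancel]

theorem meanLog_subgradient (a b : ℝ) :
    (a - b) * meanLog f p b ≤ log (partition f p a) - log (partition f p b) := by
  have hjensen := convexOn_exp.map_sum_le (t := univ) (w := posterior f p b)
    (p := fun θ => (a - b) * log (f θ)) (fun θ _ => (posterior_pos hf hp b θ).le)
    (sum_posterior hf hp b) (fun _ _ => Set.mem_univ _)
  simp only [smul_eq_mul] at hjensen
  rw [← partition_div_partition hf hp, ← le_log_iff_exp_le (div_pos
    (partition_pos hf hp a) (partition_pos hf hp b)), log_div (partition_pos hf hp a).ne'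
    (partition_pos hf hp b).ne'] at hjensen
  calc (a - b) * meanLog f p b = ∑ θ, posterior f p b θ * ((a - b) * log (f θ)) := by
        rw [meanLog, mul_sum]; exact sum_congr rfl fun θ _ => by ring
    _ ≤ _ := hjensen

theorem sum_posterior_mul_log_div (a b : ℝ) :
    ∑ θ, posterior f p a θ * log (posterior f p a θ / posterior f p b θ)
      = (a - b) * meanLog f p a + (log (partition f p b) - log (partition f p a)) := by
  have hlog : ∀ θ, log (posterior f p a θ / posterior f p b θ)
      = (a - b) * log (f θ) + (log (partition f p b) - log (partition f p a)) := fun θ => by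
    rw [posterior_div_posterior hf hp, log_mul (rpow_pos_of_pos (hf θ) _).ne'
      (div_pos (partition_pos hf hp b) (partition_pos hf hp a)).ne', log_rpow (hf θ),
      log_div (partition_pos hf hp b).ne' (partition_pos hf hp a).ne']
  simp only [hlog, mul_add, sum_add_distrib, ← sum_mul, sum_posterior hf hp, one_mul, meanLog,
    mul_sum]
  exact congrArg (· + _) (sum_congr rfl fun θ _ => by ring)

end Tempering

open Tempering in
theorem tempered_KL_antitone_general {Θ : Type*} [Fintype Θ]
    (p f : Θ → ℝ) (hp_pos : ∀ θ, 0 < p θ)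
    (hf_pos : ∀ θ, 0 < f θ) :
    AntitoneOn
      (fun β : ℝ => ∑ θ,
        (f θ ^ (1 : ℝ) * p θ / ∑ θ', f θ' ^ (1 : ℝ) * p θ') *
          Real.log ((f θ ^ (1 : ℝ) * p θ / ∑ θ', f θ' ^ (1 : ℝ) * p θ') /
            (f θ ^ β * p θ / ∑ θ', f θ' ^ β * p θ')))
      (Set.Icc 0 1) := by
  rcases isEmpty_or_nonempty Θ with _ | _
  · simp only [univ_eq_empty, sum_empty]
    exact antitoneOn_const
  change AntitoneOn (fun β => ∑ θ, posterior f p 1 θ * log (posterior f p 1 θ / posterior f p β θ))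
    (Set.Icc 0 1)
  simp only [sum_posterior_mul_log_div hf_pos hp_pos]
  have hdecr := antitoneOn_sub_mul_of_subgradient (meanLog_subgradient hf_pos hp_pos) 1
  intro β₁ hβ₁ β₂ hβ₂ hβ
  have hle := hdecr (Set.Icc_subset_Iic_self hβ₁) (Set.Icc_subset_Iic_self hβ₂) hβ
  dsimp only at hle ⊢
  linarith

/-- The KL divergence from the full posterior to the tempered posterior is
nonincreasing in the annealing exponent β on [0,1]. -/
theorem tempered_KL_antitone {Θ : Type*} [Fintype Θ]
    (p f : Θ → ℝ) (hp_pos : ∀ θ, 0 < p θ) (hp_sum : ∑ θ, p θ = 1)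
    (hf_pos : ∀ θ, 0 < f θ) :
    AntitoneOn
      (fun β : ℝ => ∑ θ,
        (f θ ^ (1 : ℝ) * p θ / ∑ θ', f θ' ^ (1 : ℝ) * p θ') *
          Real.log ((f θ ^ (1 : ℝ) * p θ / ∑ θ', f θ' ^ (1 : ℝ) * p θ') /
            (f θ ^ β * p θ / ∑ θ', f θ' ^ β * p θ')))
      (Set.Icc 0 1) :=
  tempered_KL_antitone_general p f hp_pos hf_pos
end

section
/- Monotonicity of weight variance in the tempering increment: for a fixed finite set of positive likelihood values f₁,…,f_N not all equal, the coefficient of variation of the weights w_i(Δ) = f_i^Δ is strictly increasing in Δ on (0,∞), so the equation COV(Δ) = κ has at most one solution for each κ > 0. -/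
/-!
Writing `S t = ∑ i, f i ^ t`, one has `COV(Δ)² + 1 = N · S(2Δ) / S(Δ)²`, so it suffices that
`S(2Δ) / S(Δ)²` is strictly increasing on `(0, ∞)`. Its derivative has the sign of
`S'(2Δ) S(Δ) - S(2Δ) S'(Δ)`, where `S'(t) = ∑ i, f i ^ t log (f i)`. With `x i = f i ^ Δ` and
`g i = log (f i)` this is `∑ x² g · ∑ x - ∑ x² · ∑ x g`, which equals half the double sum
`∑ i j, (g i - g j) (x i - x j) x i x j`; every term is nonnegative because `x` and `g` are both
increasing functions of `f`, and the term of a pair with `f i ≠ f j` is positive.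
-/

open Finset Real

variable {ι : Type*} [Fintype ι]

theorem sum_sum_sub_mul_sub_mul_mul (x g : ι → ℝ) :
    ∑ i, ∑ j, (g i - g j) * (x i - x j) * (x i * x j) =
      2 * ((∑ i, x i ^ 2 * g i) * ∑ i, x i - (∑ i, x i ^ 2) * ∑ i, x i * g i) := by
  have hrow : ∀ i, ∑ j, (g i - g j) * (x i - x j) * (x i * x j) =
      x i ^ 2 * g i * ∑ j, x j + x i * ∑ j, x j ^ 2 * g j
        - (x i * g i * ∑ j, x j ^ 2 + x i ^ 2 * ∑ j, x j * g j) := fun i => by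
    simp only [mul_sum, ← sum_add_distrib, ← sum_sub_distrib]
    exact sum_congr rfl fun j _ => by ring
  simp only [hrow, sum_sub_distrib, sum_add_distrib, ← sum_mul]
  ring

/-- A strict weighted Chebyshev sum inequality. -/
theorem sum_sq_mul_sum_mul_lt {x g : ι → ℝ} (hx : ∀ i, 0 < x i)
    (hxg : ∀ i j, 0 ≤ (g i - g j) * (x i - x j))
    (hstrict : ∃ i j, 0 < (g i - g j) * (x i - x j)) :
    (∑ i, x i ^ 2) * ∑ i, x i * g i < (∑ i, x i ^ 2 * g i) * ∑ i, x i := by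
  obtain ⟨i₀, j₀, h₀⟩ := hstrict
  have hterm : ∀ i j, 0 ≤ (g i - g j) * (x i - x j) * (x i * x j) := fun i j =>
    mul_nonneg (hxg i j) (mul_pos (hx i) (hx j)).le
  have hpos : 0 < ∑ i, ∑ j, (g i - g j) * (x i - x j) * (x i * x j) :=
    sum_pos' (fun i _ => sum_nonneg fun j _ => hterm i j)
      ⟨i₀, mem_univ _, sum_pos' (fun j _ => hterm i₀ j)
        ⟨j₀, mem_univ _, mul_pos h₀ (mul_pos (hx i₀) (hx j₀))⟩⟩
  rw [sum_sum_sub_mul_sub_mul_mul] at hpos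
  linarith

theorem log_sub_log_mul_rpow_sub_rpow_pos {a b Δ : ℝ} (ha : 0 < a) (hb : 0 < b) (hΔ : 0 < Δ)
    (hab : a ≠ b) : 0 < (log a - log b) * (a ^ Δ - b ^ Δ) := by
  rcases hab.lt_or_gt with h | h
  · exact mul_pos_of_neg_of_neg (sub_neg.2 (log_lt_log ha h))
      (sub_neg.2 (rpow_lt_rpow ha.le h hΔ))
  · exact mul_pos (sub_pos.2 (log_lt_log hb h)) (sub_pos.2 (rpow_lt_rpow hb.le h hΔ))

theorem log_sub_log_mul_rpow_sub_rpow_nonneg {a b Δ : ℝ} (ha : 0 < a) (hb : 0 < b)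
    (hΔ : 0 < Δ) : 0 ≤ (log a - log b) * (a ^ Δ - b ^ Δ) := by
  rcases eq_or_ne a b with rfl | hab
  · simp
  · exact (log_sub_log_mul_rpow_sub_rpow_pos ha hb hΔ hab).le

theorem rpow_sq_eq_rpow_two_mul {a : ℝ} (ha : 0 < a) (Δ : ℝ) : (a ^ Δ) ^ 2 = a ^ (2 * Δ) := by
  rw [mul_comm, rpow_mul ha.le, rpow_two]

section Tempering

variable {f : ι → ℝ}

theorem sum_rpow_pos [Nonempty ι] (hf : ∀ i, 0 < f i) (t : ℝ) : 0 < ∑ i, f i ^ t :=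
  sum_pos (fun i _ => rpow_pos_of_pos (hf i) t) univ_nonempty

theorem hasDerivAt_sum_rpow (hf : ∀ i, 0 < f i) (t : ℝ) :
    HasDerivAt (fun t => ∑ i, f i ^ t) (∑ i, f i ^ t * log (f i)) t :=
  HasDerivAt.fun_sum fun i _ => (hasStrictDerivAt_const_rpow (hf i) t).hasDerivAt

theorem sum_rpow_two_mul_mul_lt (hf : ∀ i, 0 < f i) (hne : ∃ i j, f i ≠ f j) {Δ : ℝ}
    (hΔ : 0 < Δ) :
    (∑ i, f i ^ (2 * Δ)) * ∑ i, f i ^ Δ * log (f i) <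
      (∑ i, f i ^ (2 * Δ) * log (f i)) * ∑ i, f i ^ Δ := by
  obtain ⟨i₀, j₀, h₀⟩ := hne
  simp only [← rpow_sq_eq_rpow_two_mul (hf _)]
  exact sum_sq_mul_sum_mul_lt (fun i => rpow_pos_of_pos (hf i) Δ)
    (fun i j => log_sub_log_mul_rpow_sub_rpow_nonneg (hf i) (hf j) hΔ)
    ⟨i₀, j₀, log_sub_log_mul_rpow_sub_rpow_pos (hf i₀) (hf j₀) hΔ h₀⟩

theorem strictMonoOn_sum_rpow_two_mul_div_sq (hf : ∀ i, 0 < f i) (hne : ∃ i j, f i ≠ f j) :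
    StrictMonoOn (fun Δ : ℝ => (∑ i, f i ^ (2 * Δ)) / (∑ i, f i ^ Δ) ^ 2) (Set.Ioi 0) := by
  have : Nonempty ι := ⟨hne.choose⟩
  set S := fun t : ℝ => ∑ i, f i ^ t
  set S' := fun t : ℝ => ∑ i, f i ^ t * log (f i)
  have hderiv : ∀ Δ : ℝ, HasDerivAt (fun Δ => S (2 * Δ) / S Δ ^ 2)
      ((S' (2 * Δ) * 2 * S Δ ^ 2 - S (2 * Δ) * (2 * S Δ ^ 1 * S' Δ)) / (S Δ ^ 2) ^ 2) Δ :=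
    fun Δ => ((hasDerivAt_sum_rpow hf (2 * Δ)).comp Δ
      (((hasDerivAt_id Δ).const_mul 2).congr_deriv (mul_one 2))).div
        ((hasDerivAt_sum_rpow hf Δ).pow 2) (pow_ne_zero 2 (sum_rpow_pos hf Δ).ne')
  refine strictMonoOn_of_deriv_pos (convex_Ioi 0)
    (fun Δ _ => (hderiv Δ).continuousAt.continuousWithinAt) fun Δ hΔ => ?_
  rw [interior_Ioi] at hΔ
  rw [(hderiv Δ).deriv]
  have hkey := sum_rpow_two_mul_mul_lt hf hne hΔ
  have hS := sum_rpow_pos hf Δ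
  have hnum : S' (2 * Δ) * 2 * S Δ ^ 2 - S (2 * Δ) * (2 * S Δ ^ 1 * S' Δ) =
      2 * S Δ * (S' (2 * Δ) * S Δ - S (2 * Δ) * S' Δ) := by ring
  rw [hnum]
  exact div_pos (mul_pos (by positivity) (sub_pos.2 hkey)) (by positivity)

end Tempering

section CoefVar

noncomputable def coefVar (w : ι → ℝ) : ℝ :=
  √((1 / Fintype.card ι) * ∑ i, (w i - (1 / Fintype.card ι) * ∑ j, w j) ^ 2) /
    ((1 / Fintype.card ι) * ∑ i, w i)

theorem coefVar_nonneg {w : ι → ℝ} (hw : 0 ≤ ∑ i, w i) : 0 ≤ coefVar w :=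
  div_nonneg (sqrt_nonneg _) (mul_nonneg (by positivity) hw)

theorem coefVar_sq_add_one {w : ι → ℝ} (hw : ∑ i, w i ≠ 0) :
    coefVar w ^ 2 + 1 = Fintype.card ι * ((∑ i, w i ^ 2) / (∑ i, w i) ^ 2) := by
  obtain ⟨i, -, -⟩ := exists_ne_zero_of_sum_ne_zero hw
  have : Nonempty ι := ⟨i⟩
  have hn : (Fintype.card ι : ℝ) ≠ 0 := Nat.cast_ne_zero.2 Fintype.card_ne_zero
  rw [coefVar, div_pow, sq_sqrt (by positivity)]
  simp only [sub_sq, sum_add_distrib, sum_sub_distrib, ← sum_mul, ← mul_sum, sum_const,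
    card_univ, nsmul_eq_mul]
  field_simp
  ring

theorem coefVar_lt_coefVar_iff {w v : ι → ℝ} (hw : 0 < ∑ i, w i) (hv : 0 < ∑ i, v i) :
    coefVar w < coefVar v ↔ (∑ i, w i ^ 2) / (∑ i, w i) ^ 2 < (∑ i, v i ^ 2) / (∑ i, v i) ^ 2 := by
  obtain ⟨i, -, -⟩ := exists_ne_zero_of_sum_ne_zero hw.ne'
  have : Nonempty ι := ⟨i⟩
  rw [← pow_lt_pow_iff_left₀ (coefVar_nonneg hw.le) (coefVar_nonneg hv.le) two_ne_zero,
    ← add_lt_add_iff_right 1, coefVar_sq_add_one hw.ne', coefVar_sq_add_one hv.ne',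
    mul_lt_mul_iff_right₀ (Nat.cast_pos.2 Fintype.card_pos)]

end CoefVar

/-- The coefficient of variation of tempering weights `w i = f i ^ Δ` is strictly
increasing in Δ on (0,∞), so `COV Δ = κ` has at most one solution for each κ > 0. -/
theorem cov_strictMono {N : ℕ} (f : Fin N → ℝ) (hf : ∀ i, 0 < f i)
    (hne : ∃ i j, f i ≠ f j) :
    StrictMonoOn
      (fun Δ : ℝ =>
        Real.sqrt ((1 / N) * ∑ i, (f i ^ Δ - (1 / N) * ∑ i', f i' ^ Δ) ^ 2) /
          ((1 / N) * ∑ i, f i ^ Δ))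
      (Set.Ioi 0) ∧
    ∀ κ : ℝ, 0 < κ → ∀ Δ₁ ∈ Set.Ioi (0 : ℝ), ∀ Δ₂ ∈ Set.Ioi (0 : ℝ),
      Real.sqrt ((1 / N) * ∑ i, (f i ^ Δ₁ - (1 / N) * ∑ i', f i' ^ Δ₁) ^ 2) /
          ((1 / N) * ∑ i, f i ^ Δ₁) = κ →
      Real.sqrt ((1 / N) * ∑ i, (f i ^ Δ₂ - (1 / N) * ∑ i', f i' ^ Δ₂) ^ 2) /
          ((1 / N) * ∑ i, f i ^ Δ₂) = κ →
      Δ₁ = Δ₂ := by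
  have : Nonempty (Fin N) := ⟨hne.choose⟩
  have hmono : StrictMonoOn (fun Δ : ℝ => coefVar fun i => f i ^ Δ) (Set.Ioi 0) := by
    intro a ha b hb hab
    rw [coefVar_lt_coefVar_iff (sum_rpow_pos hf a) (sum_rpow_pos hf b)]
    simpa only [rpow_sq_eq_rpow_two_mul (hf _)] using
      strictMonoOn_sum_rpow_two_mul_div_sq hf hne ha hb hab
  simp only [coefVar, Fintype.card_fin] at hmono
  exact ⟨hmono, fun _ _ Δ₁ h₁ Δ₂ h₂ hκ₁ hκ₂ => hmono.injOn h₁ h₂ (hκ₁.trans hκ₂.symm)⟩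
end
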